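/- arXiv:1505.06017 — 2 statements merged into one kernel-verified Lean document; each statement's English description precedes it below -/
import Mathlib

section
/- Let d ≥ 1, let Ω ⊆ ℝ^d be open, let r, r' > 1 be conjugate exponents, let ν, h₀ > 0, λ ∈ ℝ, and let f : Ω × ℝ → ℝ. Let u : Ω → ℝ be C², let m : Ω → ℝ be C¹ with m(x) > 0 for all x ∈ Ω, and assume that for every x ∈ Ω: (HJB) -ν Δu(x) + (h₀/r') |∇u(x)|^{r'} + λ = f(x, m(x)), and (crucial equality) ν ∇m(x) + h₀ m(x) |∇u(x)|^{r'-2} ∇u(x) = 0. Define φ := m^{1/r} and μ := ν (ν r / h₀)^{r-1}. Then φ is C¹ on Ω, the vector field V : x ↦ |∇φ(x)|^{r-2} ∇φ(x) coincides on Ω with x ↦ -(h₀/(ν r))^{r-1} φ(x)^{r-1} ∇u(x) (hence V is C¹), and for every x ∈ Ω one has μ · div V(x) = (f(x, φ(x)^r) - λ) · φ(x)^{r-1}; that is, φ solves the r-Laplace equation -μ Δ_r φ + (f(x, φ^r) - λ) φ^{r-1} = 0 pointwise on Ω. -/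
/-!
With `J_p v := |v|^{p-2} v`, the crucial equality says `ν ∇m = -h₀ m J_{r'}(∇u)`, so every power
of `m` has gradient `∇(m^q) = -(q h₀/ν) m^q J_{r'}(∇u)`. For `q = 1/r` this gives
`∇φ = -(h₀/(νr)) φ J_{r'}(∇u)`, and since `J_r` is positively homogeneous of degree `r - 1` and
inverse to `J_{r'}`, `J_r(∇φ) = -(h₀/(νr))^{r-1} φ^{r-1} ∇u`. As `φ^{r-1} = m^{1/r'}`, the
divergence of this field is computed by the product rule with `q = 1/r'`; the term
`⟨J_{r'}(∇u), ∇u⟩ = |∇u|^{r'}` combines with `Δu` into the left-hand side of the HJB equation.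
-/

/-- Divergence of a vector field on `ℝ^d`: `div V = ∑ i ∂ᵢ Vᵢ`. -/
noncomputable def vdiv {d : ℕ} (V : EuclideanSpace ℝ (Fin d) → EuclideanSpace ℝ (Fin d))
    (x : EuclideanSpace ℝ (Fin d)) : ℝ :=
  ∑ i, fderiv ℝ V x (EuclideanSpace.single i 1) i

/-- Laplacian on `ℝ^d`: `Δ f = div (∇ f)`. -/
noncomputable def lap {d : ℕ} (f : EuclideanSpace ℝ (Fin d) → ℝ)
    (x : EuclideanSpace ℝ (Fin d)) : ℝ :=
  vdiv (gradient f) x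

open scoped RealInnerProductSpace Topology

/-- The map `J_p` of `Δ_p φ = div (J_p ∇φ)`. -/
noncomputable def dualityMap {E : Type*} [NormedAddCommGroup E] [NormedSpace ℝ E] (p : ℝ)
    (v : E) : E :=
  ‖v‖ ^ (p - 2) • v

section DualityMap

variable {E : Type*} [NormedAddCommGroup E] [NormedSpace ℝ E]

lemma dualityMap_neg (p : ℝ) (v : E) : dualityMap p (-v) = -dualityMap p v := by
  simp only [dualityMap, norm_neg, smul_neg]

lemma dualityMap_smul_of_pos {a : ℝ} (ha : 0 < a) (p : ℝ) (v : E) :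
    dualityMap p (a • v) = a ^ (p - 1) • dualityMap p v := by
  rw [dualityMap, dualityMap, norm_smul, Real.norm_of_nonneg ha.le,
    Real.mul_rpow ha.le (norm_nonneg v), smul_smul, smul_smul, show p - 1 = p - 2 + 1 by ring,
    Real.rpow_add_one ha.ne']
  congr 1
  ring

lemma dualityMap_dualityMap {p q : ℝ} (hpq : p.HolderConjugate q) (v : E) :
    dualityMap p (dualityMap q v) = v := by
  rcases eq_or_ne v 0 with rfl | hv
  · simp [dualityMap]
  have hn : 0 < ‖v‖ := norm_pos_iff.2 hv
  change dualityMap p (‖v‖ ^ (q - 2) • v) = v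
  rw [dualityMap_smul_of_pos (Real.rpow_pos_of_pos hn _), dualityMap, smul_smul,
    ← Real.rpow_mul hn.le, ← Real.rpow_add hn,
    show (q - 2) * (p - 1) + (p - 2) = 0 by linear_combination hpq.sub_one_mul_conj,
    Real.rpow_zero, one_smul]

lemma inner_dualityMap_self {F : Type*} [NormedAddCommGroup F] [InnerProductSpace ℝ F]
    {p : ℝ} (hp : p ≠ 0) (v : F) : ⟪dualityMap p v, v⟫ = ‖v‖ ^ p := by
  rw [dualityMap, real_inner_smul_left, real_inner_self_eq_norm_sq, ← Real.rpow_natCast,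
    ← Real.rpow_add' (norm_nonneg v) (by simpa using hp)]
  norm_num

end DualityMap

section Gradient

variable {F : Type*} [NormedAddCommGroup F] [InnerProductSpace ℝ F] [CompleteSpace F]

lemma HasGradientAt.rpow_const {m : F → ℝ} {g x : F} (hm : HasGradientAt m g x) (hx : m x ≠ 0)
    (q : ℝ) : HasGradientAt (fun y => m y ^ q) ((q * m x ^ (q - 1)) • g) x := by
  rw [hasGradientAt_iff_hasFDerivAt] at hm ⊢
  simpa only [map_smul] using hm.rpow_const (Or.inl hx)

lemma ContDiffOn.gradient_of_isOpen {u : F → ℝ} {s : Set F} {n k : WithTop ℕ∞}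
    (hu : ContDiffOn ℝ n u s) (hs : IsOpen s) (hkn : k + 1 ≤ n) :
    ContDiffOn ℝ k (gradient u) s :=
  (InnerProductSpace.toDual ℝ F).symm.toContinuousLinearEquiv.contDiff.comp_contDiffOn
    (hu.fderiv_of_isOpen hs hkn)

variable {ν h₀ r' : ℝ} {u m : F → ℝ} {x : F}

lemma gradient_eq_of_crucial (hν : ν ≠ 0)
    (h : ν • gradient m x + (h₀ * m x * ‖gradient u x‖ ^ (r' - 2)) • gradient u x = 0) :
    gradient m x = -(h₀ / ν * m x) • dualityMap r' (gradient u x) := by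
  rw [← inv_smul_smul₀ hν (gradient m x), eq_neg_of_add_eq_zero_left h, dualityMap, smul_neg,
    smul_smul, smul_smul, ← neg_smul]
  congr 1
  field_simp

lemma hasGradientAt_rpow_of_crucial (hν : ν ≠ 0) (hm : DifferentiableAt ℝ m x) (hmx : 0 < m x)
    (h : ν • gradient m x + (h₀ * m x * ‖gradient u x‖ ^ (r' - 2)) • gradient u x = 0) (q : ℝ) :
    HasGradientAt (fun y => m y ^ q)
      (-(q * h₀ / ν * m x ^ q) • dualityMap r' (gradient u x)) x := by
  convert hm.hasGradientAt.rpow_const hmx.ne' q using 1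
  rw [gradient_eq_of_crucial hν h, smul_smul, Real.rpow_sub_one hmx.ne']
  congr 1
  field_simp

lemma dualityMap_gradient_rpow_of_crucial {r : ℝ} (hr : r.HolderConjugate r') (hν : 0 < ν)
    (hh₀ : 0 < h₀) (hm : DifferentiableAt ℝ m x) (hmx : 0 < m x)
    (h : ν • gradient m x + (h₀ * m x * ‖gradient u x‖ ^ (r' - 2)) • gradient u x = 0) :
    dualityMap r (gradient (fun y => m y ^ (1 / r)) x)
      = -(((h₀ / (ν * r)) ^ (r - 1) * (m x ^ (1 / r)) ^ (r - 1)) • gradient u x) := by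
  have hr0 := hr.pos
  rw [(hasGradientAt_rpow_of_crucial hν.ne' hm hmx h (1 / r)).gradient, neg_smul, dualityMap_neg,
    dualityMap_smul_of_pos (by positivity), dualityMap_dualityMap hr,
    ← Real.mul_rpow (by positivity) (by positivity)]
  congr 3
  field_simp

end Gradient

section Divergence

variable {d : ℕ} {V : EuclideanSpace ℝ (Fin d) → EuclideanSpace ℝ (Fin d)}
  {x : EuclideanSpace ℝ (Fin d)}

lemma Filter.EventuallyEq.vdiv_eq {W : EuclideanSpace ℝ (Fin d) → EuclideanSpace ℝ (Fin d)}
    (h : V =ᶠ[𝓝 x] W) : vdiv V x = vdiv W x := by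
  simp only [vdiv, h.fderiv_eq]

lemma vdiv_const_smul (a : ℝ) : vdiv (fun y => a • V y) x = a * vdiv V x := by
  simp only [vdiv, Finset.mul_sum]
  rw [show (fun y => a • V y) = a • V from rfl, fderiv_const_smul_field]
  rfl

lemma vdiv_smul {g : EuclideanSpace ℝ (Fin d) → ℝ} (hg : DifferentiableAt ℝ g x)
    (hV : DifferentiableAt ℝ V x) :
    vdiv (fun y => g y • V y) x = ⟪gradient g x, V x⟫ + g x * vdiv V x := by
  simp only [vdiv, fderiv_fun_smul hg hV]
  simp [Finset.sum_add_distrib, Finset.mul_sum, PiLp.inner_apply, ← inner_gradient_left, mul_comm,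
    add_comm]

lemma vdiv_rpow_smul_gradient_of_crucial {ν h₀ r' : ℝ} {u m : EuclideanSpace ℝ (Fin d) → ℝ}
    (hr' : r' ≠ 0) (hν : ν ≠ 0) (hm : DifferentiableAt ℝ m x) (hmx : 0 < m x)
    (hu : DifferentiableAt ℝ (gradient u) x)
    (h : ν • gradient m x + (h₀ * m x * ‖gradient u x‖ ^ (r' - 2)) • gradient u x = 0) (q : ℝ) :
    ν * vdiv (fun y => m y ^ q • gradient u y) x
      = m x ^ q * (ν * lap u x - q * h₀ * ‖gradient u x‖ ^ r') := by
  have hmq := hasGradientAt_rpow_of_crucial hν hm hmx h q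
  rw [vdiv_smul hmq.differentiableAt hu, hmq.gradient, real_inner_smul_left,
    inner_dualityMap_self hr', lap]
  field_simp
  ring

end Divergence

theorem generalized_hopf_cole_a_general (d : ℕ)
    (Ω : Set (EuclideanSpace ℝ (Fin d))) (hΩ : IsOpen Ω)
    (r r' ν h₀ lam : ℝ) (hr : 1 < r) (hconj : 1 / r + 1 / r' = 1)
    (hν : 0 < ν) (hh₀ : 0 < h₀)
    (f : EuclideanSpace ℝ (Fin d) → ℝ → ℝ)
    (u m : EuclideanSpace ℝ (Fin d) → ℝ)
    (hu : ContDiffOn ℝ 2 u Ω) (hm : ContDiffOn ℝ 1 m Ω)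
    (hmpos : ∀ x ∈ Ω, 0 < m x)
    (hHJB : ∀ x ∈ Ω,
      -ν * lap u x + (h₀ / r') * ‖gradient u x‖ ^ r' + lam = f x (m x))
    (hcrucial : ∀ x ∈ Ω,
      ν • gradient m x + (h₀ * m x * ‖gradient u x‖ ^ (r' - 2)) • gradient u x = 0) :
    ContDiffOn ℝ 1 (fun x => m x ^ (1 / r)) Ω ∧
    (∀ x ∈ Ω,
      ‖gradient (fun y => m y ^ (1 / r)) x‖ ^ (r - 2) • gradient (fun y => m y ^ (1 / r)) x
        = -(((h₀ / (ν * r)) ^ (r - 1) * (m x ^ (1 / r)) ^ (r - 1)) • gradient u x)) ∧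
    ContDiffOn ℝ 1
      (fun x => ‖gradient (fun y => m y ^ (1 / r)) x‖ ^ (r - 2) •
        gradient (fun y => m y ^ (1 / r)) x) Ω ∧
    (∀ x ∈ Ω,
      (ν * (ν * r / h₀) ^ (r - 1)) *
        vdiv (fun y => ‖gradient (fun z => m z ^ (1 / r)) y‖ ^ (r - 2) •
          gradient (fun z => m z ^ (1 / r)) y) x
        = (f x ((m x ^ (1 / r)) ^ r) - lam) * (m x ^ (1 / r)) ^ (r - 1)) := by
  have hrr' : r.HolderConjugate r' :=
    Real.holderConjugate_iff.2 ⟨hr, by simpa only [one_div] using hconj⟩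
  have hdm : ∀ x ∈ Ω, DifferentiableAt ℝ m x := fun x hx =>
    (hm.differentiableOn one_ne_zero).differentiableAt (hΩ.mem_nhds hx)
  have hdu : ContDiffOn ℝ 1 (gradient u) Ω := hu.gradient_of_isOpen hΩ (by norm_num)
  have hmr : ∀ x ∈ Ω, (m x ^ (1 / r)) ^ (r - 1) = m x ^ (1 / r') := fun x hx => by
    rw [← Real.rpow_mul (hmpos x hx).le, one_div_mul_eq_div, ← hrr'.div_conj_eq_sub_one]
    field_simp
  have hV : ∀ x ∈ Ω, dualityMap r (gradient (fun y => m y ^ (1 / r)) x)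
      = -(((h₀ / (ν * r)) ^ (r - 1) * (m x ^ (1 / r)) ^ (r - 1)) • gradient u x) :=
    fun x hx => dualityMap_gradient_rpow_of_crucial hrr' hν hh₀ (hdm x hx) (hmpos x hx)
      (hcrucial x hx)
  have hVW : Set.EqOn (fun x => dualityMap r (gradient (fun y => m y ^ (1 / r)) x))
      (fun x => (-((h₀ / (ν * r)) ^ (r - 1))) • (m x ^ (1 / r') • gradient u x)) Ω :=
    fun x hx => by simp only [hV x hx, hmr x hx, smul_smul, neg_mul, neg_smul]
  refine ⟨hm.rpow_const_of_ne fun x hx => (hmpos x hx).ne', hV,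
    (((hm.rpow_const_of_ne fun x hx => (hmpos x hx).ne').smul hdu).const_smul _).congr hVW,
    fun x hx => ?_⟩
  have hdiv := vdiv_rpow_smul_gradient_of_crucial hrr'.symm.ne_zero hν.ne' (hdm x hx) (hmpos x hx)
    ((hdu.differentiableOn one_ne_zero).differentiableAt (hΩ.mem_nhds hx)) (hcrucial x hx) (1 / r')
  have hμ : ν * (ν * r / h₀) ^ (r - 1) * (h₀ / (ν * r)) ^ (r - 1) = ν := by
    rw [mul_assoc, ← Real.mul_rpow (by positivity) (by positivity),
      show ν * r / h₀ * (h₀ / (ν * r)) = 1 by field_simp, Real.one_rpow, mul_one]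
  have hmφ : (m x ^ (1 / r)) ^ r = m x := by
    rw [← Real.rpow_mul (hmpos x hx).le, one_div_mul_cancel hrr'.ne_zero, Real.rpow_one]
  change _ * vdiv (fun y => dualityMap r (gradient (fun z => m z ^ (1 / r)) y)) x = _
  rw [(hVW.eventuallyEq_of_mem (hΩ.mem_nhds hx)).vdiv_eq, vdiv_const_smul, hmφ, hmr x hx,
    ← hHJB x hx]
  linear_combination (-vdiv (fun y => m y ^ (1 / r') • gradient u y) x) * hμ - hdiv

/-- (Generalized Hopf–Cole transformation, part a), pointwise version.)
Let `d ≥ 1`, `Ω ⊆ ℝ^d` open, `r, r' > 1` conjugate exponents, `ν, h₀ > 0`, `λ ∈ ℝ`,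
`f : Ω × ℝ → ℝ`. Let `u` be `C²`, `m` be `C¹` and positive on `Ω`, satisfying on `Ω` the
HJB equation `-ν Δu + (h₀/r')|∇u|^{r'} + λ = f(x, m)` and the crucial equality
`ν ∇m + h₀ m |∇u|^{r'-2} ∇u = 0`. With `φ := m^{1/r}` and `μ := ν (νr/h₀)^{r-1}`:
`φ` is `C¹` on `Ω`, the field `V = |∇φ|^{r-2} ∇φ` equals `-(h₀/(νr))^{r-1} φ^{r-1} ∇u`
on `Ω` (hence is `C¹` there), and `μ div V = (f(x, φ^r) - λ) φ^{r-1}` on `Ω`,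
i.e. `φ` solves `-μ Δ_r φ + (f(x,φ^r) - λ) φ^{r-1} = 0` pointwise. -/
theorem generalized_hopf_cole_a (d : ℕ) (hd : 1 ≤ d)
    (Ω : Set (EuclideanSpace ℝ (Fin d))) (hΩ : IsOpen Ω)
    (r r' ν h₀ lam : ℝ) (hr : 1 < r) (hr' : 1 < r') (hconj : 1 / r + 1 / r' = 1)
    (hν : 0 < ν) (hh₀ : 0 < h₀)
    (f : EuclideanSpace ℝ (Fin d) → ℝ → ℝ)
    (u m : EuclideanSpace ℝ (Fin d) → ℝ)
    (hu : ContDiffOn ℝ 2 u Ω) (hm : ContDiffOn ℝ 1 m Ω)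
    (hmpos : ∀ x ∈ Ω, 0 < m x)
    (hHJB : ∀ x ∈ Ω,
      -ν * lap u x + (h₀ / r') * ‖gradient u x‖ ^ r' + lam = f x (m x))
    (hcrucial : ∀ x ∈ Ω,
      ν • gradient m x + (h₀ * m x * ‖gradient u x‖ ^ (r' - 2)) • gradient u x = 0) :
    ContDiffOn ℝ 1 (fun x => m x ^ (1 / r)) Ω ∧
    (∀ x ∈ Ω,
      ‖gradient (fun y => m y ^ (1 / r)) x‖ ^ (r - 2) • gradient (fun y => m y ^ (1 / r)) x
        = -(((h₀ / (ν * r)) ^ (r - 1) * (m x ^ (1 / r)) ^ (r - 1)) • gradient u x)) ∧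
    ContDiffOn ℝ 1
      (fun x => ‖gradient (fun y => m y ^ (1 / r)) x‖ ^ (r - 2) •
        gradient (fun y => m y ^ (1 / r)) x) Ω ∧
    (∀ x ∈ Ω,
      (ν * (ν * r / h₀) ^ (r - 1)) *
        vdiv (fun y => ‖gradient (fun z => m z ^ (1 / r)) y‖ ^ (r - 2) •
          gradient (fun z => m z ^ (1 / r)) y) x
        = (f x ((m x ^ (1 / r)) ^ r) - lam) * (m x ^ (1 / r)) ^ (r - 1)) :=
  generalized_hopf_cole_a_general d Ω hΩ r r' ν h₀ lam hr hconj hν hh₀ f u m hu hm hmpos hHJB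
    hcrucial
end

section
/- Let -∞ < a < b < ∞, let r, r' > 1 be conjugate exponents, let ν, h₀ > 0, λ ∈ ℝ, and f : [a,b] × ℝ → ℝ. Let u : [a,b] → ℝ be C², let m : [a,b] → ℝ be C¹ with m > 0, and set F(x) := ν m'(x) + h₀ |u'(x)|^{r'-2} u'(x) m(x). Assume: (i) -ν u''(x) + (h₀/r') |u'(x)|^{r'} + λ = f(x, m(x)) for all x ∈ [a,b]; (ii) F is differentiable on (a,b) with F'(x) = 0 for all x ∈ (a,b); (iii) the Neumann conditions u'(a) = u'(b) = m'(a) = m'(b) = 0 hold. Define φ := m^{1/r} and μ := ν(νr/h₀)^{r-1}. Then φ is C¹ on [a,b] with φ'(a) = φ'(b) = 0, the function ψ := |φ'|^{r-2} φ' is C¹ on [a,b], and μ ψ'(x) = (f(x, φ(x)^r) - λ) φ(x)^{r-1} for all x ∈ [a,b]. -/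
/-!
The flux `F = ν m' + h₀ j_{r'}(u') m`, where `j_p(t) = |t|^{p-2} t`, is constant and vanishes at
`a`, so `m' = -(h₀/ν) j_{r'}(u') m` on `[a,b]`. Hence `φ' = -k j_{r'}(u') φ` with `k = h₀/(νr)`, and
since `j_r ∘ j_{r'} = id` for conjugate exponents, `ψ = j_r(φ') = -k^{r-1} u' m^{1/r'}`. This is
`C¹`, and substituting `m'` once more turns `μ ψ'` into `(-ν u'' + (h₀/r')|u'|^{r'}) φ^{r-1}`,
which is `(f - λ) φ^{r-1}` by the HJB equation.
-/

open Real Set Filter Topology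

noncomputable def signedRpow (p t : ℝ) : ℝ := |t| ^ (p - 2) * t

section signedRpow

variable {p q : ℝ}

@[simp]
lemma signedRpow_zero (p : ℝ) : signedRpow p 0 = 0 := by
  simp [signedRpow]

lemma signedRpow_neg (p t : ℝ) : signedRpow p (-t) = -signedRpow p t := by
  simp [signedRpow]

lemma abs_signedRpow (hp : p ≠ 1) (t : ℝ) : |signedRpow p t| = |t| ^ (p - 1) := by
  rcases eq_or_ne t 0 with rfl | ht
  · simp [zero_rpow (sub_ne_zero.2 hp)]
  · rw [signedRpow, abs_mul, abs_of_nonneg (rpow_nonneg (abs_nonneg t) _),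
      ← rpow_add_one (abs_ne_zero.2 ht)]
    ring_nf

lemma signedRpow_mul_self (hp : p ≠ 0) (t : ℝ) : signedRpow p t * t = |t| ^ p := by
  rcases eq_or_ne t 0 with rfl | ht
  · simp [zero_rpow hp]
  · have ht' : |t| ≠ 0 := abs_ne_zero.2 ht
    rw [signedRpow, mul_assoc, ← abs_mul_abs_self, ← mul_assoc, ← rpow_add_one ht',
      ← rpow_add_one ht']
    ring_nf

lemma signedRpow_mul_of_pos {c : ℝ} (hc : 0 < c) (t : ℝ) :
    signedRpow p (c * t) = c ^ (p - 1) * signedRpow p t := by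
  rw [signedRpow, signedRpow, abs_mul, abs_of_pos hc, mul_rpow hc.le (abs_nonneg t),
    show p - 1 = p - 2 + 1 by ring, rpow_add_one hc.ne']
  ring

lemma signedRpow_signedRpow (h : p.HolderConjugate q) (t : ℝ) :
    signedRpow p (signedRpow q t) = t := by
  rcases eq_or_ne t 0 with rfl | ht
  · simp
  · rw [signedRpow, abs_signedRpow h.symm.lt.ne', signedRpow, ← rpow_mul (abs_nonneg t),
      ← mul_assoc, ← rpow_add (abs_pos.2 ht),
      show (q - 1) * (p - 2) + (q - 2) = 0 by linear_combination h.mul_eq_add, rpow_zero, one_mul]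

lemma continuous_signedRpow (hp : 1 < p) : Continuous (signedRpow p) := by
  refine continuous_iff_continuousAt.2 fun t => ?_
  rcases eq_or_ne t 0 with rfl | ht
  · have hpow : Tendsto (fun s : ℝ => |s| ^ (p - 1)) (𝓝 0) (𝓝 0) :=
      (continuous_abs.rpow_const fun _ => Or.inr (by linarith)).tendsto' 0 0
        (by simp [zero_rpow (by linarith : p - 1 ≠ 0)])
    rw [ContinuousAt, signedRpow_zero]
    exact squeeze_zero_norm (fun s => (abs_signedRpow hp.ne' s).le) hpow
  · exact (continuous_abs.continuousAt.rpow_const (Or.inl (abs_ne_zero.2 ht))).mul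
      continuousAt_id

end signedRpow

lemma rpow_one_div_rpow_sub_one {p q M : ℝ} (h : p.HolderConjugate q) (hM : 0 ≤ M) :
    (M ^ (1 / p)) ^ (p - 1) = M ^ (1 / q) := by
  rw [← rpow_mul hM, one_div, one_div, ← h.one_sub_inv]
  field_simp [h.ne_zero]

lemma mul_rpow_sub_one_eq_of_eq_mul {p g M m' : ℝ} (hM : 0 < M) (hm' : m' = g * M) :
    m' * p * M ^ (p - 1) = p * g * M ^ p := by
  rw [hm', rpow_sub_one hM.ne']
  field_simp

lemma eq_left_of_hasDerivAt_zero {f : ℝ → ℝ} {a b : ℝ} (hf : ContinuousOn f (Icc a b))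
    (hf' : ∀ x ∈ Ioo a b, HasDerivAt f 0 x) : ∀ x ∈ Icc a b, f x = f a := by
  rintro x ⟨hax, hxb⟩
  rcases hax.eq_or_lt with rfl | hax
  · rfl
  obtain ⟨c, -, hslope⟩ := exists_hasDerivAt_eq_slope f (fun _ => 0) hax
    (hf.mono (Icc_subset_Icc_right hxb)) fun y hy => hf' y ⟨hy.1, hy.2.trans_le hxb⟩
  rw [eq_comm, div_eq_zero_iff, sub_eq_zero] at hslope
  exact hslope.resolve_right (sub_pos.2 hax).ne'

lemma neumann_flux_eq_zero {a b ν h₀ q : ℝ} {u' m m' : ℝ → ℝ} (hq : 1 < q)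
    (hu' : ContinuousOn u' (Icc a b)) (hm : ContinuousOn m (Icc a b))
    (hm' : ContinuousOn m' (Icc a b))
    (hF' : ∀ x ∈ Ioo a b,
      HasDerivAt (fun y => ν * m' y + h₀ * |u' y| ^ (q - 2) * u' y * m y) 0 x)
    (hua : u' a = 0) (hma : m' a = 0) :
    ∀ x ∈ Icc a b, ν * m' x + h₀ * signedRpow q (u' x) * m x = 0 := by
  have hF : (fun y => ν * m' y + h₀ * |u' y| ^ (q - 2) * u' y * m y)
      = fun y => ν * m' y + h₀ * signedRpow q (u' y) * m y := by
    funext y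
    rw [signedRpow, mul_assoc h₀]
  rw [hF] at hF'
  have hFc : ContinuousOn (fun y => ν * m' y + h₀ * signedRpow q (u' y) * m y) (Icc a b) :=
    (continuousOn_const.mul hm').add
      ((continuousOn_const.mul ((continuous_signedRpow hq).comp_continuousOn hu')).mul hm)
  intro x hx
  rw [eq_left_of_hasDerivAt_zero hFc hF' x hx, hua, hma]
  simp

lemma signedRpow_hopfCole {p q c M U m' : ℝ} (h : p.HolderConjugate q) (hc : 0 < c)
    (hM : 0 < M) (hm' : m' = -c * signedRpow q U * M) :
    signedRpow p (m' * (1 / p) * M ^ (1 / p - 1)) = -(c / p) ^ (p - 1) * (U * M ^ (1 / q)) := by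
  have hp := h.pos
  have hcp : 0 < c / p * M ^ (1 / p) := by positivity
  rw [mul_rpow_sub_one_eq_of_eq_mul hM hm',
    show 1 / p * (-c * signedRpow q U) * M ^ (1 / p) = -(c / p * M ^ (1 / p) * signedRpow q U)
      by ring,
    signedRpow_neg, signedRpow_mul_of_pos hcp, signedRpow_signedRpow h,
    mul_rpow (by positivity) (by positivity), rpow_one_div_rpow_sub_one h hM.le]
  ring

lemma hopfCole_equation {r r' ν h₀ lam F M U U' m' : ℝ} (h : r.HolderConjugate r')
    (hν : 0 < ν) (hh₀ : 0 < h₀) (hM : 0 < M) (hm' : m' = -(h₀ / ν) * signedRpow r' U * M)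
    (hHJB : -ν * U' + (h₀ / r') * |U| ^ r' + lam = F) :
    ν * (ν * r / h₀) ^ (r - 1) *
        (-(h₀ / ν / r) ^ (r - 1) * (U' * M ^ (1 / r') + U * (m' * (1 / r') * M ^ (1 / r' - 1))))
      = (F - lam) * (M ^ (1 / r)) ^ (r - 1) := by
  have hr := h.pos
  have hscale : (ν * r / h₀) ^ (r - 1) * (h₀ / ν / r) ^ (r - 1) = 1 := by
    rw [← mul_rpow (by positivity) (by positivity),
      show ν * r / h₀ * (h₀ / ν / r) = 1 by field_simp, one_rpow]
  have hdrift : U * (1 / r' * (-(h₀ / ν) * signedRpow r' U) * M ^ (1 / r'))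
      = -(h₀ / ν / r') * |U| ^ r' * M ^ (1 / r') := by
    rw [← signedRpow_mul_self h.symm.ne_zero U]
    ring
  rw [mul_rpow_sub_one_eq_of_eq_mul hM hm', rpow_one_div_rpow_sub_one h hM.le, hdrift, ← hHJB]
  have hν' : ν * (h₀ / ν / r') = h₀ / r' := by field_simp
  linear_combination (M ^ (1 / r') * (-(ν * U') + ν * (h₀ / ν / r') * |U| ^ r')) * hscale
    + |U| ^ r' * M ^ (1 / r') * hν'
theorem one_dimensional_hopf_cole_general (a b r r' ν h₀ lam : ℝ)
    (hr : 1 < r) (hconj : 1 / r + 1 / r' = 1)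
    (hν : 0 < ν) (hh₀ : 0 < h₀)
    (f : ℝ → ℝ → ℝ) (u' u'' m m' : ℝ → ℝ)
    (hu'' : ∀ x ∈ Set.Icc a b, HasDerivWithinAt u' (u'' x) (Set.Icc a b) x)
    (hu''c : ContinuousOn u'' (Set.Icc a b))
    (hm' : ∀ x ∈ Set.Icc a b, HasDerivWithinAt m (m' x) (Set.Icc a b) x)
    (hm'c : ContinuousOn m' (Set.Icc a b))
    (hmpos : ∀ x ∈ Set.Icc a b, 0 < m x)
    (hHJB : ∀ x ∈ Set.Icc a b,
      -ν * u'' x + (h₀ / r') * |u' x| ^ r' + lam = f x (m x))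
    (hF' : ∀ x ∈ Set.Ioo a b,
      HasDerivAt (fun y => ν * m' y + h₀ * |u' y| ^ (r' - 2) * u' y * m y) 0 x)
    (hua : u' a = 0) (hma : m' a = 0) (hmb : m' b = 0) :
    ∃ φ' : ℝ → ℝ,
      (∀ x ∈ Set.Icc a b,
        HasDerivWithinAt (fun y => m y ^ (1 / r)) (φ' x) (Set.Icc a b) x) ∧
      ContinuousOn φ' (Set.Icc a b) ∧ φ' a = 0 ∧ φ' b = 0 ∧
      ∃ ψ' : ℝ → ℝ,
        (∀ x ∈ Set.Icc a b,
          HasDerivWithinAt (fun y => |φ' y| ^ (r - 2) * φ' y) (ψ' x) (Set.Icc a b) x) ∧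
        ContinuousOn ψ' (Set.Icc a b) ∧
        ∀ x ∈ Set.Icc a b,
          (ν * (ν * r / h₀) ^ (r - 1)) * ψ' x
            = (f x ((m x ^ (1 / r)) ^ r) - lam) * (m x ^ (1 / r)) ^ (r - 1) := by
  have h : r.HolderConjugate r' := Real.holderConjugate_iff.2 ⟨hr, by simpa using hconj⟩
  have hm0 (P : Prop) : ∀ x ∈ Icc a b, m x ≠ 0 ∨ P := fun x hx => Or.inl (hmpos x hx).ne'
  have hmc : ContinuousOn m (Icc a b) := fun x hx => (hm' x hx).continuousWithinAt
  have hu'c : ContinuousOn u' (Icc a b) := fun x hx => (hu'' x hx).continuousWithinAt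
  have hflux : ∀ x ∈ Icc a b, m' x = -(h₀ / ν) * signedRpow r' (u' x) * m x := fun x hx => by
    have := neumann_flux_eq_zero h.symm.lt hu'c hmc hm'c hF' hua hma x hx
    field_simp
    linarith
  have hψ : ∀ x ∈ Icc a b, signedRpow r (m' x * (1 / r) * m x ^ (1 / r - 1))
      = -(h₀ / ν / r) ^ (r - 1) * (u' x * m x ^ (1 / r')) := fun x hx =>
    signedRpow_hopfCole h (by positivity) (hmpos x hx) (hflux x hx)
  refine ⟨fun x => m' x * (1 / r) * m x ^ (1 / r - 1),
    fun x hx => (hm' x hx).rpow_const (hm0 _ x hx),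
    (hm'c.mul continuousOn_const).mul (hmc.rpow_const (hm0 _)), by simp [hma], by simp [hmb],
    fun x => -(h₀ / ν / r) ^ (r - 1) *
      (u'' x * m x ^ (1 / r') + u' x * (m' x * (1 / r') * m x ^ (1 / r' - 1))),
    fun x hx => ?_, ?_, fun x hx => ?_⟩
  · exact (((hu'' x hx).mul ((hm' x hx).rpow_const (hm0 _ x hx))).const_mul _).congr
      hψ (hψ x hx)
  · exact continuousOn_const.mul ((hu''c.mul (hmc.rpow_const (hm0 _))).add
      (hu'c.mul ((hm'c.mul continuousOn_const).mul (hmc.rpow_const (hm0 _)))))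
  · rw [← rpow_mul (hmpos x hx).le, one_div_mul_cancel h.ne_zero, rpow_one]
    exact hopfCole_equation h hν hh₀ (hmpos x hx) (hflux x hx) (hHJB x hx)

/-- (One-dimensional corollary with Neumann conditions, pointwise form.)
Let `a < b`, `r, r' > 1` conjugate, `ν, h₀ > 0`, `λ ∈ ℝ`, `f : [a,b] × ℝ → ℝ`. Let `u` be
`C²` on `[a,b]` (derivatives `u'`, `u''`, with `u''` continuous) and `m` be `C¹` (derivative
`m'` continuous) and positive, and let `F := ν m' + h₀|u'|^{r'-2} u' m`. Assume the HJB
equation `-ν u'' + (h₀/r')|u'|^{r'} + λ = f(x, m)` on `[a,b]`, that `F` is differentiable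
with `F' = 0` on `(a,b)`, and Neumann conditions `u'(a) = u'(b) = m'(a) = m'(b) = 0`.
With `φ := m^{1/r}`, `μ := ν(νr/h₀)^{r-1}`: `φ` is `C¹` on `[a,b]` with `φ'(a) = φ'(b) = 0`,
`ψ := |φ'|^{r-2}φ'` is `C¹` on `[a,b]`, and `μ ψ' = (f(x,φ^r) - λ)φ^{r-1}` on `[a,b]`. -/
theorem one_dimensional_hopf_cole (a b r r' ν h₀ lam : ℝ) (hab : a < b)
    (hr : 1 < r) (hr' : 1 < r') (hconj : 1 / r + 1 / r' = 1)
    (hν : 0 < ν) (hh₀ : 0 < h₀)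
    (f : ℝ → ℝ → ℝ) (u u' u'' m m' : ℝ → ℝ)
    (hu' : ∀ x ∈ Set.Icc a b, HasDerivWithinAt u (u' x) (Set.Icc a b) x)
    (hu'' : ∀ x ∈ Set.Icc a b, HasDerivWithinAt u' (u'' x) (Set.Icc a b) x)
    (hu''c : ContinuousOn u'' (Set.Icc a b))
    (hm' : ∀ x ∈ Set.Icc a b, HasDerivWithinAt m (m' x) (Set.Icc a b) x)
    (hm'c : ContinuousOn m' (Set.Icc a b))
    (hmpos : ∀ x ∈ Set.Icc a b, 0 < m x)
    (hHJB : ∀ x ∈ Set.Icc a b,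
      -ν * u'' x + (h₀ / r') * |u' x| ^ r' + lam = f x (m x))
    (hF' : ∀ x ∈ Set.Ioo a b,
      HasDerivAt (fun y => ν * m' y + h₀ * |u' y| ^ (r' - 2) * u' y * m y) 0 x)
    (hua : u' a = 0) (hub : u' b = 0) (hma : m' a = 0) (hmb : m' b = 0) :
    ∃ φ' : ℝ → ℝ,
      (∀ x ∈ Set.Icc a b,
        HasDerivWithinAt (fun y => m y ^ (1 / r)) (φ' x) (Set.Icc a b) x) ∧
      ContinuousOn φ' (Set.Icc a b) ∧ φ' a = 0 ∧ φ' b = 0 ∧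
      ∃ ψ' : ℝ → ℝ,
        (∀ x ∈ Set.Icc a b,
          HasDerivWithinAt (fun y => |φ' y| ^ (r - 2) * φ' y) (ψ' x) (Set.Icc a b) x) ∧
        ContinuousOn ψ' (Set.Icc a b) ∧
        ∀ x ∈ Set.Icc a b,
          (ν * (ν * r / h₀) ^ (r - 1)) * ψ' x
            = (f x ((m x ^ (1 / r)) ^ r) - lam) * (m x ^ (1 / r)) ^ (r - 1) :=
  one_dimensional_hopf_cole_general a b r r' ν h₀ lam hr hconj hν hh₀ f u' u'' m m' hu'' hu''c hm'
    hm'c hmpos hHJB hF' hua hma hmb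
end
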